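/- arXiv:1606.03831 — 2 statements merged into one kernel-verified Lean document; each statement's English description precedes it below -/
import Mathlib

section
/- Let k be a natural number and let g_0, g_1, …, g_k : ℂ → ℂ be functions, each analytic at 0, such that the i-th iterated derivative of g_0 vanishes at 0 for every i with 0 ≤ i ≤ k. Then there exists a function h : ℂ → ℂ, analytic at 0, such that for all t in some neighborhood of 0 one has W(g_0,…,g_k)(t) = t · h(t), where W(g_0,…,g_k)(t) denotes the determinant of the (k+1)×(k+1) matrix whose (i,j) entry is the i-th iterated derivative of g_j evaluated at t (0 ≤ i, j ≤ k). -/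
private lemma analyticAt_deriv' {f : ℂ → ℂ} {x : ℂ} (hf : AnalyticAt ℂ f x) :
    AnalyticAt ℂ (deriv f) x := by
  have h := hf.eventually_analyticAt
  have hs : {y | AnalyticAt ℂ f y} ∈ nhds x := h
  have : AnalyticOnNhd ℂ f {y | AnalyticAt ℂ f y} := fun y hy => hy
  exact this.deriv x hf

private lemma analyticAt_iteratedDeriv' {f : ℂ → ℂ} {x : ℂ} (hf : AnalyticAt ℂ f x) (n : ℕ) :
    AnalyticAt ℂ (iteratedDeriv n f) x := by
  induction n with
  | zero => simpa [iteratedDeriv_zero] using hf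
  | succ n ih => rw [iteratedDeriv_succ]; exact analyticAt_deriv' ih

/-- If `g 0` vanishes to order at least `k+1` at `0` (all iterated derivatives of order
`≤ k` vanish at `0`) and each `g j` is analytic at `0`, then the Wronskian
`t ↦ det (iteratedDeriv i (g j) t)` is divisible by `t` near `0`: it equals `t * h t`
for some function `h` analytic at `0`. -/
theorem stmt_3 (k : ℕ) (g : Fin (k + 1) → ℂ → ℂ)
    (hg : ∀ j, AnalyticAt ℂ (g j) 0)
    (hg0 : ∀ i ≤ k, iteratedDeriv i (g 0) 0 = 0) :
    ∃ h : ℂ → ℂ, AnalyticAt ℂ h 0 ∧ ∀ᶠ t in nhds (0 : ℂ),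
      Matrix.det (Matrix.of fun i j : Fin (k + 1) => iteratedDeriv (i : ℕ) (g j) t)
        = t * h t := by
  set W : ℂ → ℂ := fun t =>
    Matrix.det (Matrix.of fun i j : Fin (k + 1) => iteratedDeriv (i : ℕ) (g j) t) with hW
  have hWa : AnalyticAt ℂ W 0 := by
    have hdet : W = fun t => ∑ σ : Equiv.Perm (Fin (k + 1)),
        ((Equiv.Perm.sign σ : ℤ) : ℂ) *
          ∏ i : Fin (k + 1), iteratedDeriv ((σ i : Fin (k + 1)) : ℕ) (g i) t := by
      funext t
      simp [hW, Matrix.det_apply, Units.smul_def, zsmul_eq_mul]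
    rw [hdet]
    apply Finset.analyticAt_fun_sum
    intro σ _
    apply AnalyticAt.mul analyticAt_const
    apply Finset.analyticAt_fun_prod
    intro i _
    exact analyticAt_iteratedDeriv' (hg i) _
  have hW0 : W 0 = 0 := by
    apply Matrix.det_eq_zero_of_column_eq_zero 0
    intro i
    exact hg0 i (Nat.lt_succ_iff.mp i.isLt)
  refine ⟨dslope W 0, ?_, ?_⟩
  · obtain ⟨p, hp⟩ := hWa
    exact ⟨p.fslope, hp.has_fpower_series_dslope_fslope⟩
  · filter_upwards with t
    have := sub_smul_dslope W 0 t
    simp only [sub_zero, hW0, smul_eq_mul] at this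
    exact this.symm
end

section
/- Let n and k be natural numbers, p ∈ ℂⁿ, and let ν : ℂ → ℂⁿ be analytic at 0 with ν(0) = p. Let f_0 : ℂⁿ → ℂ be a function such that on some neighborhood of p one has f_0(z) = ∑_{i ∈ s} ∏_{j=0}^{k} h_{i,j}(z), where s is a finite index set and each h_{i,j} : ℂⁿ → ℂ is analytic at p with h_{i,j}(p) = 0, and let f_1, …, f_k : ℂⁿ → ℂ be analytic at p. Then the determinant of the (k+1)×(k+1) matrix whose (i,j) entry is the i-th iterated derivative of f_j ∘ ν evaluated at 0 (0 ≤ i, j ≤ k) equals 0. -/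
/-- Iterated derivatives at a point only depend on the germ of the function. -/
lemma iteratedDeriv_congr_nhds {f g : ℂ → ℂ} {x : ℂ} (h : f =ᶠ[nhds x] g) (m : ℕ) :
    iteratedDeriv m f x = iteratedDeriv m g x := by
  have h' : f =ᶠ[nhdsWithin x Set.univ] g := by rwa [nhdsWithin_univ]
  simp only [iteratedDeriv, ← iteratedFDerivWithin_univ]
  rw [h'.iteratedFDerivWithin_eq h.self_of_nhds m]

/-- The derivative of a function analytic at a point is analytic at that point. -/
lemma analyticAt_deriv {U : ℂ → ℂ} {x : ℂ} (hU : AnalyticAt ℂ U x) :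
    AnalyticAt ℂ (deriv U) x := by
  obtain ⟨s, hs, hUs⟩ := hU.eventually_analyticAt.exists_mem
  exact AnalyticOnNhd.deriv (fun y hy => hUs y hy) x (mem_of_mem_nhds hs)

/-- A function of the form `z ^ e * U z`, with `U` analytic, has vanishing iterated
derivatives at `0` up to order `e - 1`. -/
lemma iteratedDeriv_pow_mul_eq_zero :
    ∀ (m e : ℕ) (U : ℂ → ℂ), m < e → AnalyticAt ℂ U 0 →
      iteratedDeriv m (fun z => z ^ e * U z) 0 = 0 := by
  intro m
  induction m with
  | zero =>
    intro e U he hU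
    simp [iteratedDeriv_zero, zero_pow (by omega : e ≠ 0)]
  | succ m ih =>
    intro e U he hU
    obtain ⟨e', rfl⟩ : ∃ e', e = e' + 1 := ⟨e - 1, by omega⟩
    rw [iteratedDeriv_succ']
    have hVa : AnalyticAt ℂ (fun z => ((e' + 1 : ℕ) : ℂ) * U z + z * deriv U z) 0 :=
      ((analyticAt_const.mul hU).add ((analyticAt_id).mul (analyticAt_deriv hU)))
    have hd : deriv (fun z => z ^ (e' + 1) * U z) =ᶠ[nhds (0 : ℂ)]
        fun z => z ^ e' * (((e' + 1 : ℕ) : ℂ) * U z + z * deriv U z) := by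
      filter_upwards [hU.eventually_analyticAt] with z hz
      rw [deriv_fun_mul (differentiableAt_pow _) hz.differentiableAt, deriv_pow_field]
      push_cast
      ring
    rw [iteratedDeriv_congr_nhds hd m]
    exact ih e' _ (by omega) hVa

/-- Wronskian vanishing (Theorem 2.1 of the paper, via evaluation along germs of curves):
if `f 0` lies in `m_p^(k+1)` (near `p` it is a finite sum of products of `k+1` functions
analytic at `p` and vanishing at `p`), `f 1, …, f k` are analytic at `p`, and `ν` is a
germ of holomorphic curve through `p`, then the Wronskian determinant
`det (iteratedDeriv i (f j ∘ ν) 0)` vanishes. -/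
theorem stmt_4 (n k : ℕ) (p : Fin n → ℂ) (ν : ℂ → Fin n → ℂ)
    (hν : AnalyticAt ℂ ν 0) (hν0 : ν 0 = p)
    (f : Fin (k + 1) → (Fin n → ℂ) → ℂ)
    (ι : Type*) (s : Finset ι) (h : ι → ℕ → (Fin n → ℂ) → ℂ)
    (hha : ∀ i ∈ s, ∀ j ≤ k, AnalyticAt ℂ (h i j) p)
    (hh0 : ∀ i ∈ s, ∀ j ≤ k, h i j p = 0)
    (hf0 : ∀ᶠ z in nhds p, f 0 z = ∑ i ∈ s, ∏ j ∈ Finset.range (k + 1), h i j z)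
    (hfa : ∀ j : Fin (k + 1), j ≠ 0 → AnalyticAt ℂ (f j) p) :
    Matrix.det (Matrix.of fun i j : Fin (k + 1) => iteratedDeriv (i : ℕ) (f j ∘ ν) 0)
      = 0 := by
  -- the composed factors
  set g : ι → ℕ → ℂ → ℂ := fun i j t => h i j (ν t) with hg_def
  have hga : ∀ i ∈ s, ∀ j ∈ Finset.range (k + 1), AnalyticAt ℂ (g i j) 0 := by
    intro i hi j hj
    exact AnalyticAt.comp (hν0 ▸ hha i hi j (Nat.lt_succ_iff.mp (Finset.mem_range.mp hj))) hν
  have hg0 : ∀ i ∈ s, ∀ j ∈ Finset.range (k + 1), g i j 0 = 0 := by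
    intro i hi j hj
    simp only [hg_def, hν0]
    exact hh0 i hi j (Nat.lt_succ_iff.mp (Finset.mem_range.mp hj))
  -- each factor is z times an analytic function (the dslope)
  have hfactor : ∀ i ∈ s, ∀ j ∈ Finset.range (k + 1), ∀ z : ℂ,
      g i j z = z * dslope (g i j) 0 z := by
    intro i hi j hj z
    have := sub_smul_dslope (g i j) 0 z
    rw [sub_zero, hg0 i hi j hj, sub_zero] at this
    simpa [smul_eq_mul] using this.symm
  have hdslope_a : ∀ i ∈ s, ∀ j ∈ Finset.range (k + 1),
      AnalyticAt ℂ (dslope (g i j) 0) 0 := by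
    intro i hi j hj
    obtain ⟨q, hq⟩ := hga i hi j hj
    exact ⟨q.fslope, hq.has_fpower_series_dslope_fslope⟩
  -- the analytic "cofactor" function
  set U : ℂ → ℂ := fun z => ∑ i ∈ s, ∏ j ∈ Finset.range (k + 1), dslope (g i j) 0 z
    with hU_def
  have hUa : AnalyticAt ℂ U 0 :=
    Finset.analyticAt_fun_sum s fun i hi =>
      Finset.analyticAt_fun_prod (Finset.range (k + 1)) fun j hj => hdslope_a i hi j hj
  -- the germ identity for the first column
  have hkey : (f 0 ∘ ν) =ᶠ[nhds (0 : ℂ)] fun z => z ^ (k + 1) * U z := by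
    have htends : Filter.Tendsto ν (nhds 0) (nhds p) := hν0 ▸ hν.continuousAt.tendsto
    filter_upwards [htends.eventually hf0] with z hz
    simp only [Function.comp_apply, hz, hU_def, Finset.mul_sum]
    refine Finset.sum_congr rfl fun i hi => ?_
    calc ∏ j ∈ Finset.range (k + 1), h i j (ν z)
        = ∏ j ∈ Finset.range (k + 1), z * dslope (g i j) 0 z :=
          Finset.prod_congr rfl fun j hj => hfactor i hi j hj z
      _ = z ^ (k + 1) * ∏ j ∈ Finset.range (k + 1), dslope (g i j) 0 z := by
          rw [Finset.prod_mul_distrib, Finset.prod_const, Finset.card_range]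
  -- the first column vanishes
  apply Matrix.det_eq_zero_of_column_eq_zero 0
  intro i
  simp only [Matrix.of_apply]
  rw [iteratedDeriv_congr_nhds hkey (i : ℕ)]
  exact iteratedDeriv_pow_mul_eq_zero (i : ℕ) (k + 1) U i.isLt hUa
end
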